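/- arXiv:2110.04570 — 2 statements merged into one kernel-verified Lean document; each statement's English description precedes it below -/
import Mathlib

section
/- (Proposition 1.) Fix a measurable state space E, a measurable safe set 𝕊 ⊆ E, an initial state s_0, and a horizon N. For each k ∈ {0,…,N−1}, let π^k be a policy sequence covering times k,…,N−1, with induced closed-loop Markov kernels (κ^k_k, …, κ^k_{N−1}). Assume: (i) the initial policy sequence π^0 satisfies P[s_{1,…,N} ∈ 𝕊 | s_0; κ^0_0,…,κ^0_{N−1}] ≥ S_0 for some S_0 ∈ [0,1]; and (ii) for each k ∈ {1,…,N−1} there exists γ_k ∈ (0,1] such that for every state σ ∈ E, P[s_{k+1,…,N} ∈ 𝕊 | s_k = σ; κ^k_k,…,κ^k_{N−1}] ≥ γ_k · P[s_{k+1,…,N} ∈ 𝕊 | s_k = σ; κ^{k−1}_k,…,κ^{k−1}_{N−1}]. Then the closed-loop system obtained by applying at each time k the first kernel κ^k_k of the k-th policy sequence satisfies P[s_{1,…,N} ∈ 𝕊 | s_0; κ^0_0, κ^1_1, …, κ^{N−1}_{N−1}] ≥ (∏_{k=1}^{N−1} γ_k) · S_0. -/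
/-!
Interpolate between the initial policy sequence and the shrinking-horizon closed loop by the
closed loops `closedLoopUpTo κ j`, which apply `κ^t_t` at the times `t < j` and then follow
`π^j`.
Passing from `j` to `j + 1` only replaces the kernels of `π^j` by those of `π^{j+1}` from time
`j + 1` on. The remaining safety probability is obtained from its value at time `j + 1` by
integrating against the common kernels of times `0, …, j`, which is monotone and commutes with
scaling, so the update constraint at time `j + 1` costs exactly a factor `γ (j + 1)` at time `0`.
-/

open MeasureTheory ProbabilityTheory

/-- `safeProb κ S k m σ` : probability that the time-inhomogeneous Markov chain with
kernels `κ`, started at state `σ` at time `k`, has its next `m` states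
(at times `k+1, …, k+m`) all in `S` (the remaining mission-wide probability of safety). -/
noncomputable def safeProb {E : Type*} [MeasurableSpace E]
    (κ : ℕ → Kernel E E) (S : Set E) : ℕ → ℕ → E → ENNReal
  | _, 0, _ => 1
  | k, m + 1, σ => ∫⁻ σ', S.indicator (safeProb κ S (k + 1) m) σ' ∂(κ k σ)

section

variable {E : Type*} [MeasurableSpace E] {S : Set E}

theorem safeProb_congr {κ₁ κ₂ : ℕ → Kernel E E} {k m : ℕ}
    (h : Set.EqOn κ₁ κ₂ (Set.Ico k (k + m))) :
    safeProb κ₁ S k m = safeProb κ₂ S k m := by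
  induction m generalizing k with
  | zero => rfl
  | succ m ih =>
    have hk : κ₁ k = κ₂ k := h ⟨le_rfl, by omega⟩
    have hnext := ih (k := k + 1) (h.mono (Set.Ico_subset_Ico (by omega) (by omega)))
    funext σ
    simp only [safeProb, hk, hnext]

theorem const_mul_safeProb_le_of_eqOn {κ₁ κ₂ : ℕ → Kernel E E} {c : ENNReal} {k m p : ℕ}
    (hagree : Set.EqOn κ₁ κ₂ (Set.Ico k (k + p)))
    (htail : ∀ σ, c * safeProb κ₂ S (k + p) m σ ≤ safeProb κ₁ S (k + p) m σ) (σ : E) :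
    c * safeProb κ₂ S k (m + p) σ ≤ safeProb κ₁ S k (m + p) σ := by
  induction p generalizing k σ with
  | zero => exact htail σ
  | succ p ih =>
    have hk : κ₁ k = κ₂ k := hagree ⟨le_rfl, by omega⟩
    have hnext : ∀ σ',
        c * safeProb κ₂ S (k + 1) (m + p) σ' ≤ safeProb κ₁ S (k + 1) (m + p) σ' :=
      ih (k := k + 1) (hagree.mono (Set.Ico_subset_Ico (by omega) (by omega)))
        (by rwa [Nat.add_right_comm])
    calc c * safeProb κ₂ S k (m + p + 1) σ
        ≤ ∫⁻ σ', c * S.indicator (safeProb κ₂ S (k + 1) (m + p)) σ' ∂(κ₂ k σ) :=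
          lintegral_const_mul_le _ _
      _ ≤ safeProb κ₁ S k (m + p + 1) σ := by
        rw [safeProb, hk]
        refine lintegral_mono fun σ' => ?_
        by_cases hσ' : σ' ∈ S <;> simp [hσ', hnext σ']

/-- The closed loop after the first `j` policy updates of shrinking-horizon control. -/
noncomputable def closedLoopUpTo (κ : ℕ → ℕ → Kernel E E) (j : ℕ) : ℕ → Kernel E E :=
  fun t => if t < j then κ t t else κ j t

variable {κ : ℕ → ℕ → Kernel E E}

theorem closedLoopUpTo_zero : closedLoopUpTo κ 0 = κ 0 := by
  funext t
  simp [closedLoopUpTo]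

theorem closedLoopUpTo_of_le {j t : ℕ} (h : j ≤ t) : closedLoopUpTo κ j t = κ j t := by
  simp [closedLoopUpTo, Nat.not_lt.mpr h]

theorem closedLoopUpTo_succ_eqOn (j : ℕ) :
    Set.EqOn (closedLoopUpTo κ (j + 1)) (closedLoopUpTo κ j) (Set.Iio (j + 1)) := by
  intro t (ht : t < j + 1)
  rcases Nat.lt_or_ge t j with h | h
  · simp [closedLoopUpTo, h, ht]
  · obtain rfl : t = j := by omega
    simp [closedLoopUpTo]

theorem closedLoopUpTo_eqOn_diag (N : ℕ) :
    Set.EqOn (closedLoopUpTo κ (N - 1)) (fun t => κ t t) (Set.Iio N) := by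
  intro t (ht : t < N)
  rcases Nat.lt_or_ge t (N - 1) with h | h
  · simp [closedLoopUpTo, h]
  · obtain rfl : t = N - 1 := by omega
    simp [closedLoopUpTo]

theorem const_mul_safeProb_closedLoopUpTo_le_succ {N j : ℕ} {c : ENNReal} (hj : j + 1 ≤ N)
    (hupdate : ∀ σ, c * safeProb (κ j) S (j + 1) (N - (j + 1)) σ ≤
      safeProb (κ (j + 1)) S (j + 1) (N - (j + 1)) σ) (σ : E) :
    c * safeProb (closedLoopUpTo κ j) S 0 N σ ≤
      safeProb (closedLoopUpTo κ (j + 1)) S 0 N σ := by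
  have htail : ∀ σ, c * safeProb (closedLoopUpTo κ j) S (j + 1) (N - (j + 1)) σ ≤
      safeProb (closedLoopUpTo κ (j + 1)) S (j + 1) (N - (j + 1)) σ := by
    rw [safeProb_congr fun t ht => closedLoopUpTo_of_le (κ := κ) (Nat.le_of_succ_le ht.1),
      safeProb_congr fun t ht => closedLoopUpTo_of_le (κ := κ) ht.1]
    exact hupdate
  have hagree :
      Set.EqOn (closedLoopUpTo κ (j + 1)) (closedLoopUpTo κ j) (Set.Ico 0 (0 + (j + 1))) :=
    (closedLoopUpTo_succ_eqOn j).mono fun t ht => by simpa using ht.2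
  have hN : N = N - (j + 1) + (j + 1) := by omega
  rw [hN]
  exact const_mul_safeProb_le_of_eqOn hagree (by simpa using htail) σ

theorem prod_mul_safeProb_le_safeProb_closedLoopUpTo {γ : ℕ → ENNReal} {N n : ℕ}
    (hn : n ≤ N - 1)
    (hupdate : ∀ k ∈ Finset.Icc 1 (N - 1), ∀ σ : E,
      γ k * safeProb (κ (k - 1)) S k (N - k) σ ≤ safeProb (κ k) S k (N - k) σ) (σ : E) :
    (∏ k ∈ Finset.Icc 1 n, γ k) * safeProb (κ 0) S 0 N σ ≤
      safeProb (closedLoopUpTo κ n) S 0 N σ := by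
  induction n with
  | zero => simp [closedLoopUpTo_zero]
  | succ n ih =>
    calc (∏ k ∈ Finset.Icc 1 (n + 1), γ k) * safeProb (κ 0) S 0 N σ
        = γ (n + 1) * ((∏ k ∈ Finset.Icc 1 n, γ k) * safeProb (κ 0) S 0 N σ) := by
          rw [Finset.prod_Icc_succ_top (by omega), mul_comm _ (γ _), mul_assoc]
      _ ≤ γ (n + 1) * safeProb (closedLoopUpTo κ n) S 0 N σ := by
          gcongr
          exact ih (by omega)
      _ ≤ safeProb (closedLoopUpTo κ (n + 1)) S 0 N σ :=
          const_mul_safeProb_closedLoopUpTo_le_succ (by omega)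
            (by simpa using hupdate (n + 1) (Finset.mem_Icc.mpr ⟨by omega, hn⟩)) σ

end

theorem mwps_shrinking_horizon_general {E : Type*} [MeasurableSpace E]
    (κ : ℕ → ℕ → Kernel E E)
    (S : Set E)
    (N : ℕ) (s₀ : E)
    (S₀ : ENNReal)
    (γ : ℕ → ENNReal)
    (hinit : S₀ ≤ safeProb (κ 0) S 0 N s₀)
    (hupdate : ∀ k ∈ Finset.Icc 1 (N - 1), ∀ σ : E,
      γ k * safeProb (κ (k - 1)) S k (N - k) σ ≤ safeProb (κ k) S k (N - k) σ) :
    (∏ k ∈ Finset.Icc 1 (N - 1), γ k) * S₀ ≤ safeProb (fun t => κ t t) S 0 N s₀ := by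
  calc (∏ k ∈ Finset.Icc 1 (N - 1), γ k) * S₀
      ≤ (∏ k ∈ Finset.Icc 1 (N - 1), γ k) * safeProb (κ 0) S 0 N s₀ := by gcongr
    _ ≤ safeProb (closedLoopUpTo κ (N - 1)) S 0 N s₀ :=
        prod_mul_safeProb_le_safeProb_closedLoopUpTo le_rfl hupdate s₀
    _ = safeProb (fun t => κ t t) S 0 N s₀ := by
        rw [safeProb_congr ((closedLoopUpTo_eqOn_diag N).mono fun t ht => by simpa using ht.2)]

/-- **Proposition 1.** For each time `k`, let `κ k` be the family of
closed-loop Markov kernels induced by the policy sequence `π^k` (of which only the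
kernels `κ k t` for `t = k, …, N-1` are relevant). Assume the initial policy sequence
achieves MWPS at least `S₀`, and each policy update satisfies the `γ k`-discounted
remaining-MWPS constraint at every state. Then the shrinking-horizon closed-loop system
`t ↦ κ t t`, applying at each time `k` the first kernel of the `k`-th policy sequence,
achieves MWPS at least `(∏ k ∈ {1,…,N-1}, γ k) * S₀`. -/
theorem mwps_shrinking_horizon {E : Type*} [MeasurableSpace E]
    (κ : ℕ → ℕ → Kernel E E) (hκ : ∀ j t, IsMarkovKernel (κ j t))
    (S : Set E) (hS : MeasurableSet S)
    (N : ℕ) (hN : 1 ≤ N) (s₀ : E)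
    (S₀ : ENNReal) (hS₀ : S₀ ≤ 1)
    (γ : ℕ → ENNReal)
    (hγ0 : ∀ k ∈ Finset.Icc 1 (N - 1), 0 < γ k)
    (hγ1 : ∀ k ∈ Finset.Icc 1 (N - 1), γ k ≤ 1)
    (hinit : S₀ ≤ safeProb (κ 0) S 0 N s₀)
    (hupdate : ∀ k ∈ Finset.Icc 1 (N - 1), ∀ σ : E,
      γ k * safeProb (κ (k - 1)) S k (N - k) σ ≤ safeProb (κ k) S k (N - k) σ) :
    (∏ k ∈ Finset.Icc 1 (N - 1), γ k) * S₀ ≤ safeProb (fun t => κ t t) S 0 N s₀ :=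
  mwps_shrinking_horizon_general κ S N s₀ S₀ γ hinit hupdate
end

section
/- (Corollary 1, guarantee of MWPS.) Under the assumptions of Proposition 1 (initial policy sequence with MWPS at least S_0, and each policy update satisfying the γ_k-discounted remaining-MWPS constraint at every state), if additionally the factors are chosen so that (∏_{k=1}^{N−1} γ_k) · S_0 = S for a prescribed level S ∈ [0,1], then the shrinking-horizon closed-loop system, which applies at each time k the first kernel κ^k_k of the k-th policy sequence, satisfies the prescribed mission-wide probability of safety constraint: P[s_{1,…,N} ∈ 𝕊 | s_0; κ^0_0, κ^1_1, …, κ^{N−1}_{N−1}] ≥ S. -/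
open MeasureTheory ProbabilityTheory

open Finset

/-!
Backward induction along the horizon. Write `Vₖ` for the remaining safety probability of the
closed loop from time `k` and `Wₖ` for that of the `k`-th policy sequence. Both take their step
at time `k` with the same kernel `κ k k`, and the update constraint turns `W` of plan `k` at time
`k + 1` into `W` of plan `k + 1` at the cost of a factor `γ (k + 1)`. Hence
`(∏ i ∈ Ioc k (N - 1), γ i) * Wₖ ≤ Vₖ` for all `k ≤ N`, and at `k = 0` this is `Slvl ≤ V₀`.
-/

section SafeProb

variable {E : Type*} [MeasurableSpace E]

theorem const_mul_safeProb_succ_le {ν ν' : ℕ → Kernel E E} {S : Set E} {c : ENNReal} {k m : ℕ}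
    (hk : ν k = ν' k) (h : ∀ σ, c * safeProb ν S (k + 1) m σ ≤ safeProb ν' S (k + 1) m σ)
    (σ : E) : c * safeProb ν S k (m + 1) σ ≤ safeProb ν' S k (m + 1) σ := by
  simp only [safeProb, hk]
  calc c * ∫⁻ σ', S.indicator (safeProb ν S (k + 1) m) σ' ∂(ν' k σ)
      ≤ ∫⁻ σ', S.indicator (fun σ' ↦ c * safeProb ν S (k + 1) m σ') σ' ∂(ν' k σ) := by
        simpa only [Set.indicator_mul_right] using lintegral_const_mul_le _ _
    _ ≤ ∫⁻ σ', S.indicator (safeProb ν' S (k + 1) m) σ' ∂(ν' k σ) :=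
        lintegral_mono fun σ' ↦ Set.indicator_le_indicator (h σ')

theorem const_mul_safeProb_le_safeProb_diag {κ : ℕ → ℕ → Kernel E E} {S : Set E} {N : ℕ}
    {c : ℕ → ENNReal} (hcN : c N ≤ 1)
    (hc : ∀ k < N, ∀ σ, c k * safeProb (κ k) S (k + 1) (N - (k + 1)) σ ≤
      c (k + 1) * safeProb (κ (k + 1)) S (k + 1) (N - (k + 1)) σ)
    {k : ℕ} (hk : k ≤ N) (σ : E) :
    c k * safeProb (κ k) S k (N - k) σ ≤ safeProb (fun t ↦ κ t t) S k (N - k) σ := by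
  induction hk using Nat.decreasingInduction generalizing σ with
  | self => simpa [safeProb] using hcN
  | of_succ k hkN ih =>
    obtain ⟨m, hm⟩ : ∃ m, N - k = m + 1 := ⟨N - (k + 1), by omega⟩
    have hm' : N - (k + 1) = m := by omega
    rw [hm]
    refine const_mul_safeProb_succ_le (ν' := fun t ↦ κ t t) rfl (fun σ' ↦ ?_) σ
    rw [← hm']
    exact (hc k hkN σ').trans (ih σ')

end SafeProb

theorem mwps_guarantee_general {E : Type*} [MeasurableSpace E]
    (κ : ℕ → ℕ → Kernel E E)
    (S : Set E)
    (N : ℕ) (s₀ : E)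
    (S₀ : ENNReal)
    (γ : ℕ → ENNReal)
    (hinit : S₀ ≤ safeProb (κ 0) S 0 N s₀)
    (hupdate : ∀ k ∈ Finset.Icc 1 (N - 1), ∀ σ : E,
      γ k * safeProb (κ (k - 1)) S k (N - k) σ ≤ safeProb (κ k) S k (N - k) σ)
    (Slvl : ENNReal)
    (hchoice : (∏ k ∈ Finset.Icc 1 (N - 1), γ k) * S₀ = Slvl) :
    Slvl ≤ safeProb (fun t => κ t t) S 0 N s₀ := by
  set c : ℕ → ENNReal := fun k ↦ ∏ i ∈ Ioc k (N - 1), γ i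
  have hdiscount : ∀ k < N, ∀ σ, c k * safeProb (κ k) S (k + 1) (N - (k + 1)) σ ≤
      c (k + 1) * safeProb (κ (k + 1)) S (k + 1) (N - (k + 1)) σ := by
    intro k hk σ
    rcases lt_or_eq_of_le (Nat.le_sub_one_of_lt hk) with hlt | rfl
    · have hck : c k = c (k + 1) * γ (k + 1) := by
        rw [mul_comm]
        simp only [c, mul_prod_Ioc_eq_prod_Icc (show k + 1 ≤ N - 1 from hlt),
          Icc_add_one_left_eq_Ioc]
      rw [hck, mul_assoc]
      gcongr
      simpa using hupdate (k + 1) (mem_Icc.mpr ⟨by omega, hlt⟩) σ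
    · -- at `k = N - 1` both factors are empty products and no steps remain
      simp [c, Nat.sub_add_cancel (Nat.one_le_of_lt hk), safeProb]
  have hc0 : c 0 = ∏ k ∈ Icc 1 (N - 1), γ k := by simp [c, ← Icc_add_one_left_eq_Ioc]
  calc Slvl = c 0 * S₀ := by rw [hc0, hchoice]
    _ ≤ c 0 * safeProb (κ 0) S 0 N s₀ := by gcongr
    _ ≤ safeProb (fun t ↦ κ t t) S 0 N s₀ :=
        const_mul_safeProb_le_safeProb_diag (by simp [c]) hdiscount (Nat.zero_le N) s₀

/-- **Corollary 1, guarantee of MWPS.** Under the assumptions of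
Proposition 1 (initial policy sequence with MWPS at least `S₀`, and each policy update
satisfying the `γ k`-discounted remaining-MWPS constraint at every state), if in addition
the factors satisfy `(∏ k ∈ {1,…,N-1}, γ k) * S₀ = Slvl` for a prescribed level
`Slvl ∈ [0,1]`, then the shrinking-horizon closed-loop system `t ↦ κ t t` satisfies the
prescribed mission-wide probability of safety constraint `MWPS ≥ Slvl`. -/
theorem mwps_guarantee {E : Type*} [MeasurableSpace E]
    (κ : ℕ → ℕ → Kernel E E) (hκ : ∀ j t, IsMarkovKernel (κ j t))
    (S : Set E) (hS : MeasurableSet S)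
    (N : ℕ) (hN : 1 ≤ N) (s₀ : E)
    (S₀ : ENNReal) (hS₀ : S₀ ≤ 1)
    (γ : ℕ → ENNReal)
    (hγ0 : ∀ k ∈ Finset.Icc 1 (N - 1), 0 < γ k)
    (hγ1 : ∀ k ∈ Finset.Icc 1 (N - 1), γ k ≤ 1)
    (hinit : S₀ ≤ safeProb (κ 0) S 0 N s₀)
    (hupdate : ∀ k ∈ Finset.Icc 1 (N - 1), ∀ σ : E,
      γ k * safeProb (κ (k - 1)) S k (N - k) σ ≤ safeProb (κ k) S k (N - k) σ)
    (Slvl : ENNReal) (hSlvl : Slvl ≤ 1)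
    (hchoice : (∏ k ∈ Finset.Icc 1 (N - 1), γ k) * S₀ = Slvl) :
    Slvl ≤ safeProb (fun t => κ t t) S 0 N s₀ :=
  mwps_guarantee_general κ S N s₀ S₀ γ hinit hupdate Slvl hchoice
end
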